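/- arXiv:2006.11219 — 2 statements merged into one kernel-verified Lean document; each statement's English description precedes it below -/
import Mathlib

section
/- For all u ∈ ℕ+ and j,l ∈ ℕ+, in the abelian subalgebra spanned by the h_m^Γ: p^Γ_u(j,l) := [x_j^{Γ,+}, D^{Γ,-}_{u−1,1}(j,l)] = Σ_{k=0}^{⌊(u−1)/2⌋} Σ_{i=0}^{u} (−1)^{k+i} C(u,k) C(u,i) h^Γ_{(u−2i)j+(u−2k)l} + [u even]·Σ_{i=0}^{u} (−1)^{u/2+i} C(u−1,(u−2)/2) C(u,i) h^Γ_{(u−2i)j}, with convention h^Γ_{−m} = h^Γ_m. -/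
open Finset

noncomputable section

/- Setting: `A` plays the role of the universal enveloping algebra `U(O)` of the
Onsager algebra.  `X m = x_m^{Γ,+}`, `Y m = x_m^{Γ,-}`, `H m = h_m^Γ` (indexed by `ℤ`
via the conventions `x_{-m}^{Γ,±} = -x_m^{Γ,±}`, `x_0^{Γ,±} = 0`, `h_{-m}^Γ = h_m^Γ`),
and the Lie brackets of `O` are imposed as commutator relations. -/
variable {A : Type*} [Ring A] [Algebra ℂ A]

/-- `Λ^Γ_{j,l,1} = -(h^Γ_{j+l} - h^Γ_{j-l})`. -/
def Lam1 (H : ℤ → A) (j l : ℤ) : A := -(H (j + l) - H (j - l))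

/-- `D^{Γ,+}_{u,1}(j,l)`. -/
def Dp (X H : ℤ → A) (j l : ℤ) : ℕ → A
  | 0 => X j
  | u + 1 => ((1 : ℂ) / 2) • ⁅Dp X H j l u, Lam1 H j l⁆

/-- `D^{Γ,-}_{u,1}(j,l)`. -/
def Dm (Y H : ℤ → A) (j l : ℤ) : ℕ → A
  | 0 => Y l
  | u + 1 => (-((1 : ℂ) / 2)) • ⁅Dm Y H j l u, Lam1 H j l⁆

/-- `p^Γ_s(j,l) = [x_j^{Γ,+}, D^{Γ,-}_{s-1,1}(j,l)]`. -/
def pG (X Y H : ℤ → A) (j l : ℤ) (s : ℕ) : A := ⁅X j, Dm Y H j l (s - 1)⁆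

/-- `Λ^Γ_{j,l,n}`, via the recursion `n Λ_n = -∑_{i=1}^n p_i Λ_{n-i}` equivalent to the
exponential generating series definition. -/
def Lam (X Y H : ℤ → A) (j l : ℤ) : ℕ → A
  | 0 => 1
  | n + 1 =>
      (-(((n : ℂ) + 1)⁻¹)) •
        ∑ i ∈ Finset.range (n + 1), pG X Y H j l (i + 1) * Lam X Y H j l (n - i)
  decreasing_by omega

/-- `D^{Γ,+}_{u,v}(j,l)`. -/
def DvP (X H : ℤ → A) (j l : ℤ) : ℕ → ℕ → A
  | u, 0 => if u = 0 then 1 else 0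
  | u, v + 1 =>
      (((v : ℂ) + 1)⁻¹) • ∑ i ∈ Finset.range (u + 1), Dp X H j l i * DvP X H j l (u - i) v

/-- `D^{Γ,-}_{u,v}(j,l)`. -/
def DvM (Y H : ℤ → A) (j l : ℤ) : ℕ → ℕ → A
  | u, 0 => if u = 0 then 1 else 0
  | u, v + 1 =>
      (((v : ℂ) + 1)⁻¹) • ∑ i ∈ Finset.range (u + 1), Dm Y H j l i * DvM Y H j l (u - i) v

/-! Write `δ_a f n = f (n + a) - f (n - a)` for the central difference. The relation for
`⁅h_k, x_l^-⁆` says that `x ↦ -(1/2) ⁅x, Λ_{j,l,1}⁆` acts on `m ↦ x_m^-` as `δ_l δ_j`, and,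
as `h` is even, `⁅x_j^+, x_n^-⁆ = δ_j h n`; hence `p_u(j,l) = δ_l^{u-1} (δ_j^u h) l`. Expanding
the powers of `δ` binomially gives the double sum. Since `δ_j^u h` has parity `(-1)^u`, the
`k`-th and `(u-k)`-th terms of the `δ_l`-expansion agree up to sign, and Pascal's rule folds the
`u` terms of `δ_l^{u-1}` into the first half `k < (u+1)/2` of a degree-`u` alternating binomial
sum, plus a middle term when `u` is even. -/

open Function

section CentralDiff

variable {G M N : Type*} [AddCommGroup G] [AddCommGroup M] [AddCommGroup N]

def centralDiff (a : G) (f : G → M) : G → M := fun n => f (n + a) - f (n - a)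

lemma centralDiff_apply (a : G) (f : G → M) (n : G) :
    centralDiff a f n = f (n + a) - f (n - a) := rfl

lemma centralDiff_iterate_apply_eq_fwdDiff (a : G) (f : G → M) (s : ℕ) (n : G) :
    (centralDiff a)^[s] f n = (fwdDiff (2 • a))^[s] f (n - s • a) := by
  induction s generalizing n with
  | zero => simp
  | succ s ih =>
    rw [iterate_succ_apply', iterate_succ_apply', centralDiff_apply, fwdDiff, ih, ih]
    rw [show n + a - s • a = n - (s + 1) • a + 2 • a by module,
      show n - a - s • a = n - (s + 1) • a by module]

lemma centralDiff_iterate_apply (a : G) (f : G → M) (s : ℕ) (n : G) :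
    (centralDiff a)^[s] f n =
      ∑ i ∈ range (s + 1), ((-1 : ℤ) ^ i * s.choose i) • f (n + ((s : ℤ) - 2 * i) • a) := by
  rw [centralDiff_iterate_apply_eq_fwdDiff, fwdDiff_iter_eq_sum_shift, ← sum_range_reflect]
  refine sum_congr rfl fun i hi => ?_
  have hi : i ≤ s := Nat.lt_succ_iff.mp (mem_range.mp hi)
  rw [Nat.add_sub_cancel, Nat.sub_sub_self hi, Nat.choose_symm hi, ← natCast_zsmul,
    ← natCast_zsmul, Nat.cast_sub hi]
  congr 2
  module

lemma commute_centralDiff (a b : G) :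
    Function.Commute (centralDiff a : (G → M) → G → M) (centralDiff b) := by
  intro f
  funext n
  simp only [centralDiff_apply]
  abel_nf

lemma semiconj_comp_centralDiff {F : Type*} [FunLike F M N] [AddMonoidHomClass F M N] (φ : F)
    (a : G) : Semiconj (fun f : G → M => φ ∘ f) (centralDiff a) (centralDiff a) := by
  intro f
  funext n
  simp only [comp_apply, centralDiff_apply, map_sub]

lemma centralDiff_apply_neg {f : G → M} {c : ℤ} (hf : ∀ n, f (-n) = c • f n) (a n : G) :
    centralDiff a f (-n) = (-c) • centralDiff a f n := by
  rw [centralDiff_apply, centralDiff_apply, show -n + a = -(n - a) by abel,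
    show -n - a = -(n + a) by abel, hf, hf, smul_sub, neg_smul, neg_smul]
  abel

lemma centralDiff_iterate_apply_neg {f : G → M} {c : ℤ} (hf : ∀ n, f (-n) = c • f n)
    (a : G) (s : ℕ) (n : G) :
    (centralDiff a)^[s] f (-n) = ((-1) ^ s * c) • (centralDiff a)^[s] f n := by
  induction s generalizing n with
  | zero => simp [hf]
  | succ s ih =>
    rw [iterate_succ_apply', centralDiff_apply_neg ih, pow_succ]
    congr 1
    ring

end CentralDiff

section AlternatingBinomialSums

variable {M : Type*} [AddCommGroup M]

lemma sum_range_choose_split_reflect (s a b : ℕ) (hab : a + b = s + 1) (F : ℕ → M)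
    (hF : ∀ k ≤ s + 1, F (s + 1 - k) = (-1 : ℤ) ^ (s + 1) • F k) :
    ∑ k ∈ range (s + 1), ((-1 : ℤ) ^ k * s.choose k) • F k =
      ∑ k ∈ range a, ((-1 : ℤ) ^ k * s.choose k) • F k +
        ∑ k ∈ range b, ((-1 : ℤ) ^ (k + 1) * s.choose k) • F (k + 1) := by
  rw [← hab, sum_range_add, ← sum_range_reflect _ b]
  congr 1
  refine sum_congr rfl fun k hk => ?_
  have hk : k < b := mem_range.mp hk
  have hsk : a + (b - 1 - k) = s - k := by omega
  rw [hsk, Nat.choose_symm (by omega), show s - k = s + 1 - (k + 1) by omega,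
    hF (k + 1) (by omega), smul_smul, mul_right_comm, ← pow_add,
    show s + 1 - (k + 1) + (s + 1) = k + 1 + 2 * (s - k) by omega, pow_add, pow_mul]
  simp

lemma sum_range_choose_add_shift (s n : ℕ) (F : ℕ → M) :
    ∑ k ∈ range (n + 1), ((-1 : ℤ) ^ k * s.choose k) • F k +
        ∑ k ∈ range n, ((-1 : ℤ) ^ (k + 1) * s.choose k) • F (k + 1) =
      ∑ k ∈ range (n + 1), ((-1 : ℤ) ^ k * (s + 1).choose k) • F k := by
  rw [sum_range_succ' _ n, sum_range_succ' (fun k => ((-1 : ℤ) ^ k * (s + 1).choose k) • F k) n,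
    add_right_comm, ← sum_add_distrib]
  congr 1
  · refine sum_congr rfl fun k _ => ?_
    rw [← add_smul, Nat.choose_succ_succ']
    push_cast
    ring_nf
  · simp

lemma sum_range_choose_fold (u : ℕ) (hu : 1 ≤ u) (F : ℕ → M)
    (hF : ∀ k ≤ u, F (u - k) = (-1 : ℤ) ^ u • F k) :
    ∑ k ∈ range u, ((-1 : ℤ) ^ k * (u - 1).choose k) • F k =
      ∑ k ∈ range ((u + 1) / 2), ((-1 : ℤ) ^ k * u.choose k) • F k +
        if Even u then ((-1 : ℤ) ^ (u / 2) * (u - 1).choose ((u - 2) / 2)) • F (u / 2) else 0 := by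
  obtain ⟨t, rfl | rfl⟩ : ∃ t, u = 2 * t + 2 ∨ u = 2 * t + 1 := by
    obtain ⟨t, ht | ht⟩ := Nat.even_or_odd' u
    · exact ⟨t - 1, Or.inl (by omega)⟩
    · exact ⟨t, Or.inr ht⟩
  · have hF' : ∀ k ≤ 2 * t + 1 + 1, F (2 * t + 1 + 1 - k) = (-1 : ℤ) ^ (2 * t + 1 + 1) • F k :=
      hF
    rw [if_pos ⟨t + 1, by omega⟩, show (2 * t + 2 + 1) / 2 = t + 1 by omega,
      show (2 * t + 2) / 2 = t + 1 by omega, show (2 * t + 2 - 2) / 2 = t by omega,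
      show 2 * t + 2 - 1 = 2 * t + 1 by omega,
      sum_range_choose_split_reflect (2 * t + 1) (t + 1) (t + 1) (by omega) F hF',
      sum_range_succ (fun k => ((-1 : ℤ) ^ (k + 1) * (2 * t + 1).choose k) • F (k + 1)) t,
      ← add_assoc, sum_range_choose_add_shift]
  · rw [if_neg (Nat.not_even_two_mul_add_one t), add_zero,
      show (2 * t + 1 + 1) / 2 = t + 1 by omega, Nat.add_sub_cancel,
      sum_range_choose_split_reflect (2 * t) (t + 1) t (by omega) F hF, sum_range_choose_add_shift]

end AlternatingBinomialSums

lemma centralDiff_iterate_pred_apply_self {G M : Type*} [AddCommGroup G] [AddCommGroup M]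
    {u : ℕ} (hu : 1 ≤ u) {K : G → M} (hK : ∀ n, K (-n) = (-1 : ℤ) ^ u • K n) (c : G) :
    (centralDiff c)^[u - 1] K c =
      ∑ k ∈ range ((u + 1) / 2), ((-1 : ℤ) ^ k * u.choose k) • K (((u : ℤ) - 2 * k) • c) +
        if Even u then ((-1 : ℤ) ^ (u / 2) * (u - 1).choose ((u - 2) / 2)) • K 0 else 0 := by
  have hfold := sum_range_choose_fold u hu (fun k => K (((u : ℤ) - 2 * k) • c)) fun k hk => by
    rw [← hK, ← neg_smul, Nat.cast_sub hk]
    congr 2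
    ring
  rw [centralDiff_iterate_apply, Nat.sub_add_cancel hu]
  refine (sum_congr rfl fun k _ => ?_).trans (hfold.trans ?_)
  · rw [Nat.cast_sub hu]
    congr 2
    module
  · split_ifs with h_even
    · obtain ⟨r, hr⟩ := h_even
      rw [show (u : ℤ) - 2 * (u / 2 : ℕ) = 0 by omega, zero_smul]
    · rfl

section OnsagerRelations

attribute [local instance] LieRing.ofAssociativeRing

lemma neg_half_smul_lie_Lam1 {Y H : ℤ → A}
    (hHY : ∀ k l : ℤ, ⁅H k, Y l⁆ = -(2 • (Y (l + k) + Y (l - k)))) (j l m : ℤ) :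
    (-((1 : ℂ) / 2)) • ⁅Y m, Lam1 H j l⁆ = centralDiff l (centralDiff j Y) m := by
  have half_two : ∀ x : A, (-((1 : ℂ) / 2)) • (2 • x) = -x := fun x => by
    rw [two_smul, ← two_smul ℂ, smul_smul]; norm_num
  rw [Lam1, lie_neg, lie_sub, ← lie_skew (Y m), ← lie_skew (Y m), hHY, hHY]
  simp only [centralDiff_apply, neg_neg, neg_sub, smul_sub, half_two]
  abel_nf

lemma Dm_eq_iterate {Y H : ℤ → A}
    (hHY : ∀ k l : ℤ, ⁅H k, Y l⁆ = -(2 • (Y (l + k) + Y (l - k)))) (j l : ℤ) (s : ℕ) :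
    Dm Y H j l s = (centralDiff l ∘ centralDiff j)^[s] Y l := by
  let T : A →+ A := AddMonoidHom.mk' (fun x => (-((1 : ℂ) / 2)) • ⁅x, Lam1 H j l⁆)
    fun x y => by rw [add_lie, smul_add]
  have hT : T ∘ Y = (centralDiff l ∘ centralDiff j) Y :=
    funext (neg_half_smul_lie_Lam1 hHY j l)
  induction s with
  | zero => rfl
  | succ s ih =>
    rw [iterate_succ_apply, ← hT, ← ((semiconj_comp_centralDiff T l).comp_right
      (semiconj_comp_centralDiff T j)).iterate_right s]
    exact congrArg T ih

lemma lie_X_Y_eq_centralDiff {L : Type*} [AddCommGroup L] [Bracket L L] {X Y H : ℤ → L}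
    (hHneg : ∀ m : ℤ, H (-m) = H m)
    (hXY : ∀ j l : ℤ, ⁅X j, Y l⁆ = H (j + l) - H (j - l)) (j n : ℤ) :
    ⁅X j, Y n⁆ = centralDiff j H n := by
  rw [hXY, centralDiff_apply, add_comm, ← hHneg (j - n), neg_sub]

lemma pG_eq_centralDiff_iterate {X Y H : ℤ → A} (hHneg : ∀ m : ℤ, H (-m) = H m)
    (hXY : ∀ j l : ℤ, ⁅X j, Y l⁆ = H (j + l) - H (j - l))
    (hHY : ∀ k l : ℤ, ⁅H k, Y l⁆ = -(2 • (Y (l + k) + Y (l - k)))) (j l : ℤ) {u : ℕ}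
    (hu : 1 ≤ u) :
    pG X Y H j l u = (centralDiff l)^[u - 1] ((centralDiff j)^[u] H) l := by
  let adX : A →+ A := AddMonoidHom.mk' (fun y => ⁅X j, y⁆) (lie_add (X j))
  have hadX : adX ∘ Y = centralDiff j H := funext (lie_X_Y_eq_centralDiff hHneg hXY j)
  calc pG X Y H j l u = adX ((centralDiff l ∘ centralDiff j)^[u - 1] Y l) := by
        rw [← Dm_eq_iterate hHY]; rfl
    _ = (centralDiff l ∘ centralDiff j)^[u - 1] (centralDiff j H) l := by
        rw [← hadX, ← ((semiconj_comp_centralDiff adX l).comp_right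
          (semiconj_comp_centralDiff adX j)).iterate_right (u - 1)]
        rfl
    _ = (centralDiff l)^[u - 1] ((centralDiff j)^[u] H) l := by
        rw [(commute_centralDiff l j).comp_iterate, comp_apply, ← iterate_succ_apply,
          Nat.succ_eq_add_one, Nat.sub_add_cancel hu]

end OnsagerRelations

theorem p_u_formula_general (X Y H : ℤ → A)
    (hHneg : ∀ m : ℤ, H (-m) = H m)
    (hXY : ∀ j l : ℤ, ⁅X j, Y l⁆ = H (j + l) - H (j - l))
    (hHY : ∀ k l : ℤ, ⁅H k, Y l⁆ = -(2 • (Y (l + k) + Y (l - k))))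
    (u : ℕ) (hu : 1 ≤ u) (j l : ℕ+) :
    pG X Y H ((j : ℕ) : ℤ) ((l : ℕ) : ℤ) u =
      (∑ k ∈ Finset.range ((u + 1) / 2), ∑ i ∈ Finset.range (u + 1),
        ((-1 : ℤ) ^ (k + i) * (u.choose k : ℤ) * (u.choose i : ℤ)) •
          H (((u : ℤ) - 2 * i) * ((j : ℕ) : ℤ) + ((u : ℤ) - 2 * k) * ((l : ℕ) : ℤ)))
      + (if Even u then
          ∑ i ∈ Finset.range (u + 1),
            ((-1 : ℤ) ^ (u / 2 + i) * ((u - 1).choose ((u - 2) / 2) : ℤ) * (u.choose i : ℤ)) •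
              H (((u : ℤ) - 2 * i) * ((j : ℕ) : ℤ))
        else 0) := by
  have h_parity : ∀ n, (centralDiff ((j : ℕ) : ℤ))^[u] H (-n) =
      (-1 : ℤ) ^ u • (centralDiff ((j : ℕ) : ℤ))^[u] H n := fun n => by
    rw [centralDiff_iterate_apply_neg (c := 1) (fun m => by rw [hHneg, one_smul]), mul_one]
  rw [pG_eq_centralDiff_iterate hHneg hXY hHY _ _ hu,
    centralDiff_iterate_pred_apply_self hu h_parity]
  congr 1
  · refine sum_congr rfl fun k _ => ?_
    rw [centralDiff_iterate_apply, smul_sum]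
    refine sum_congr rfl fun i _ => ?_
    rw [smul_smul, smul_eq_mul, smul_eq_mul]
    congr 1 <;> ring_nf
  · split_ifs
    · rw [centralDiff_iterate_apply, smul_sum]
      refine sum_congr rfl fun i _ => ?_
      rw [smul_smul, smul_eq_mul, zero_add]
      congr 1
      ring
    · rfl

/-- Explicit formula for `p^Γ_u(j,l) = [x_j^{Γ,+}, D^{Γ,-}_{u-1,1}(j,l)]` as a
`ℤ`-linear combination of the `h^Γ_n` (Proposition 3.2 of the paper). -/
theorem p_u_formula (X Y H : ℤ → A)
    (hXneg : ∀ m : ℤ, X (-m) = -X m) (hX0 : X 0 = 0)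
    (hYneg : ∀ m : ℤ, Y (-m) = -Y m) (hY0 : Y 0 = 0)
    (hHneg : ∀ m : ℤ, H (-m) = H m)
    (hXY : ∀ j l : ℤ, ⁅X j, Y l⁆ = H (j + l) - H (j - l))
    (hHX : ∀ k j : ℤ, ⁅H k, X j⁆ = 2 • (X (j + k) - X (k - j)))
    (hHY : ∀ k l : ℤ, ⁅H k, Y l⁆ = -(2 • (Y (l + k) + Y (l - k))))
    (hHH : ∀ k m : ℤ, ⁅H k, H m⁆ = 0)
    (u : ℕ) (hu : 1 ≤ u) (j l : ℕ+) :
    pG X Y H ((j : ℕ) : ℤ) ((l : ℕ) : ℤ) u =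
      (∑ k ∈ Finset.range ((u + 1) / 2), ∑ i ∈ Finset.range (u + 1),
        ((-1 : ℤ) ^ (k + i) * (u.choose k : ℤ) * (u.choose i : ℤ)) •
          H (((u : ℤ) - 2 * i) * ((j : ℕ) : ℤ) + ((u : ℤ) - 2 * k) * ((l : ℕ) : ℤ)))
      + (if Even u then
          ∑ i ∈ Finset.range (u + 1),
            ((-1 : ℤ) ^ (u / 2 + i) * ((u - 1).choose ((u - 2) / 2) : ℤ) * (u.choose i : ℤ)) •
              H (((u : ℤ) - 2 * i) * ((j : ℕ) : ℤ))
        else 0) :=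
  p_u_formula_general X Y H hHneg hXY hHY u hu j l
end
end

section
/- In U(O), for all u,n ∈ ℤ≥0 and j,l ∈ ℕ+: D^{Γ,+}_{u,1}(j,l) · Λ^Γ_{j,l,n} = Σ_{i=0}^n (i+1) Λ^Γ_{j,l,n−i} · D^{Γ,+}_{i+u,1}(j,l). -/
open Finset

noncomputable section

/- Setting: `A` plays the role of the universal enveloping algebra `U(O)` of the
Onsager algebra.  `X m = x_m^{Γ,+}`, `Y m = x_m^{Γ,-}`, `H m = h_m^Γ` (indexed by `ℤ`
via the conventions `x_{-m}^{Γ,±} = -x_m^{Γ,±}`, `x_0^{Γ,±} = 0`, `h_{-m}^Γ = h_m^Γ`),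
and the Lie brackets of `O` are imposed as commutator relations. -/
variable {A : Type*} [Ring A] [Algebra ℂ A]

/-! With `P(z) = ∑ₛ pₛ zˢ`, the relation `[pₛ, D_u] = 2 D_{u+s}` shows that `D_u Λ(z)` and
`Λ(z) ∑ᵢ (i+1) zⁱ D_{i+u}` both solve the system `z F_u' = -P F_u + 2 ∑_{s ≥ 1} zˢ F_{u+s}` with
`F_u(0) = D_u`, and in characteristic zero this system has only one solution.

The relation itself starts from `[[x_j, D⁻_{s-1}], x_j] = 2 D⁺_s`, which is an Onsager-relation
computation for `D⁻_0 = x_l⁻` transported along `ad Λ₁`; it then propagates to all `D⁺_u` because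
`ad pₛ` and `ad Λ₁` commute, both `pₛ` and `Λ₁` lying in the abelian span of the `h_m`. -/

theorem two_mul_sum_range_sub_add_one (m : ℕ) :
    2 * ∑ k ∈ range (m + 1), (m - k + 1) = (m + 1) * (m + 2) := by
  have h := sum_range_reflect (fun k => k + 1) (m + 1)
  simp only [add_tsub_cancel_right] at h
  rw [h]
  clear h
  induction m with
  | zero => rfl
  | succ m ih => rw [sum_range_succ, mul_add, ih]; ring

section ShiftRecursion

variable {R : Type*} [Ring R]

/-- For the generating series `F_u(z) = ∑ₙ f n u zⁿ` and `P(z) = ∑ᵢ P i z^(i+1)`, this is the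
coefficientwise form of `z F_u' = -P F_u + 2 ∑_{s ≥ 1} z^s F_{u+s}`. -/
def IsShiftRecursion (P : ℕ → R) (f : ℕ → ℕ → R) : Prop :=
  ∀ n u, (n + 1) • f (n + 1) u =
    -∑ i ∈ range (n + 1), P i * f (n - i) u + 2 • ∑ i ∈ range (n + 1), f (n - i) (u + i + 1)

theorem IsShiftRecursion.unique [IsAddTorsionFree R] {P : ℕ → R} {f g : ℕ → ℕ → R}
    (hf : IsShiftRecursion P f) (hg : IsShiftRecursion P g) (h0 : f 0 = g 0) : f = g := by
  funext n
  induction n using Nat.strong_induction_on with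
  | _ n ih =>
    rcases n with _ | n
    · exact h0
    funext u
    refine IsAddTorsionFree.nsmul_right_injective n.succ_ne_zero ?_
    simp only [hf n u, hg n u]
    congr 2 <;> exact sum_congr rfl fun i hi => by rw [ih (n - i) (by grind)]

variable {P Λ D : ℕ → R}

theorem isShiftRecursion_mul
    (hΛ : ∀ n, (n + 1) • Λ (n + 1) = -∑ i ∈ range (n + 1), P i * Λ (n - i))
    (hD : ∀ s w, D w * P s = P s * D w - 2 • D (w + s + 1)) :
    IsShiftRecursion P fun n u => D u * Λ n := by
  intro n u
  calc (n + 1) • (D u * Λ (n + 1)) = -∑ i ∈ range (n + 1), D u * P i * Λ (n - i) := by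
        rw [← mul_smul_comm, hΛ, mul_neg, mul_sum]
        simp only [mul_assoc]
    _ = _ := by
        simp only [hD, sub_mul, sum_sub_distrib, smul_mul_assoc, ← smul_sum, mul_assoc]
        abel

theorem sum_mul_succ_smul_eq_two_nsmul_sum_sum (n u : ℕ) :
    ∑ i ∈ range (n + 1 + 1), (i * (i + 1)) • (Λ (n + 1 - i) * D (i + u)) =
      2 • ∑ s ∈ range (n + 1), ∑ i ∈ range (n - s + 1),
        (i + 1) • (Λ (n - s - i) * D (i + (u + s + 1))) := by
  calc _ = ∑ m ∈ range (n + 1), ((m + 1) * (m + 2)) • (Λ (n - m) * D (m + 1 + u)) := by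
        rw [sum_range_succ', zero_mul, zero_smul, add_zero]
        simp only [Nat.add_sub_add_right]
    _ = ∑ m ∈ range (n + 1), ∑ k ∈ range (m + 1),
          2 • ((m - k + 1) • (Λ (n - k - (m - k)) * D (m - k + (u + k + 1)))) := by
        refine sum_congr rfl fun m hm => ?_
        rw [← smul_sum, ← two_mul_sum_range_sub_add_one, mul_smul, sum_smul]
        congr 1
        refine sum_congr rfl fun k hk => ?_
        rw [show n - k - (m - k) = n - m by grind, show m - k + (u + k + 1) = m + 1 + u by grind]
    _ = _ := by
        rw [sum_range_diag_flip (n + 1)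
          fun s i => 2 • ((i + 1) • (Λ (n - s - i) * D (i + (u + s + 1)))), smul_sum]
        refine sum_congr rfl fun s hs => ?_
        rw [show n + 1 - s = n - s + 1 by grind, smul_sum]

theorem isShiftRecursion_sum
    (hΛ : ∀ n, (n + 1) • Λ (n + 1) = -∑ i ∈ range (n + 1), P i * Λ (n - i)) :
    IsShiftRecursion P fun n u => ∑ i ∈ range (n + 1), (i + 1) • (Λ (n - i) * D (i + u)) := by
  intro n u
  -- split the weight `(n + 1) (i + 1)` as `(i + 1) (n + 1 - i) + i (i + 1)`
  have hsplit : (n + 1) • ∑ i ∈ range (n + 1 + 1), (i + 1) • (Λ (n + 1 - i) * D (i + u)) =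
      ∑ i ∈ range (n + 1 + 1), (i + 1) • (((n + 1 - i) • Λ (n + 1 - i)) * D (i + u)) +
        ∑ i ∈ range (n + 1 + 1), (i * (i + 1)) • (Λ (n + 1 - i) * D (i + u)) := by
    rw [smul_sum, ← sum_add_distrib]
    refine sum_congr rfl fun i hi => ?_
    rw [smul_mul_assoc, smul_smul, smul_smul, ← add_smul]
    congr 1
    have : i ≤ n + 1 := by grind
    zify [this]
    ring
  have hΛpart : ∑ i ∈ range (n + 1 + 1), (i + 1) • (((n + 1 - i) • Λ (n + 1 - i)) * D (i + u)) =
      -∑ k ∈ range (n + 1), P k *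
        ∑ i ∈ range (n - k + 1), (i + 1) • (Λ (n - k - i) * D (i + u)) := by
    rw [sum_range_succ, Nat.sub_self, zero_smul, zero_mul, smul_zero, add_zero]
    calc _ = -∑ i ∈ range (n + 1), ∑ k ∈ range (n - i + 1),
          (i + 1) • (P k * Λ (n - i - k) * D (i + u)) := by
          rw [← sum_neg_distrib]
          refine sum_congr rfl fun i hi => ?_
          rw [show n + 1 - i = n - i + 1 by grind, hΛ, neg_mul, smul_neg, sum_mul, smul_sum]
      _ = _ := by
          rw [sum_comm' (t' := range (n + 1)) (s' := fun k => range (n - k + 1)) (by grind)]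
          refine congrArg _ (sum_congr rfl fun k hk => ?_)
          rw [mul_sum]
          refine sum_congr rfl fun i hi => ?_
          rw [mul_smul_comm, Nat.sub_right_comm, mul_assoc]
  simp only [hsplit, hΛpart, sum_mul_succ_smul_eq_two_nsmul_sum_sum]

end ShiftRecursion

section Onsager

attribute [local instance] LieRing.ofAssociativeRing

theorem lie_eq_zero_of_mem_span {R L : Type*} [CommRing R] [LieRing L] [LieAlgebra R L]
    {s : Set L} (hs : ∀ x ∈ s, ∀ y ∈ s, ⁅x, y⁆ = 0) {a b : L}
    (ha : a ∈ Submodule.span R s) (hb : b ∈ Submodule.span R s) : ⁅a, b⁆ = 0 := by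
  induction ha, hb using Submodule.span_induction₂ with
  | mem_mem x y hx hy => exact hs x hx y hy
  | zero_left => exact zero_lie _
  | zero_right => exact lie_zero _
  | add_left _ _ _ _ _ _ h₁ h₂ => rw [add_lie, h₁, h₂, add_zero]
  | add_right _ _ _ _ _ _ h₁ h₂ => rw [lie_add, h₁, h₂, add_zero]
  | smul_left _ _ _ _ _ h => rw [smul_lie, h, smul_zero]
  | smul_right _ _ _ _ _ h => rw [lie_smul, h, smul_zero]

def shiftOp (H : ℤ → A) (j l : ℤ) : A →ₗ[ℂ] A := -((1 : ℂ) / 2) • LieAlgebra.ad ℂ A (Lam1 H j l)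

variable {X Y H : ℤ → A} {j l : ℤ}

theorem shiftOp_apply (a : A) : shiftOp H j l a = -((1 : ℂ) / 2) • ⁅Lam1 H j l, a⁆ := rfl

theorem Dp_succ (u : ℕ) : Dp X H j l (u + 1) = shiftOp H j l (Dp X H j l u) := by
  rw [Dp, shiftOp_apply, ← lie_skew, smul_neg, neg_smul]

theorem Dm_succ (u : ℕ) : Dm Y H j l (u + 1) = -shiftOp H j l (Dm Y H j l u) := by
  rw [Dm, shiftOp_apply, ← lie_skew, smul_neg, neg_smul]

theorem Lam1_mem_span : Lam1 H j l ∈ Submodule.span ℂ (Set.range H) :=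
  neg_mem (sub_mem (Submodule.subset_span ⟨_, rfl⟩) (Submodule.subset_span ⟨_, rfl⟩))

theorem lie_shiftOp_of_mem_span (hHH : ∀ k m : ℤ, ⁅H k, H m⁆ = 0) {a : A}
    (ha : a ∈ Submodule.span ℂ (Set.range H)) (b : A) :
    ⁅a, shiftOp H j l b⁆ = shiftOp H j l ⁅a, b⁆ := by
  have hcomm : ⁅a, Lam1 H j l⁆ = 0 :=
    lie_eq_zero_of_mem_span (by simp [hHH]) ha Lam1_mem_span
  rw [shiftOp_apply, shiftOp_apply, lie_smul, leibniz_lie a, hcomm, zero_lie, zero_add]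

theorem Dm_mem_span (hHY : ∀ k l : ℤ, ⁅H k, Y l⁆ = -(2 • (Y (l + k) + Y (l - k)))) (u : ℕ) :
    Dm Y H j l u ∈ Submodule.span ℂ (Set.range Y) := by
  have hstable : Submodule.span ℂ (Set.range Y) ≤
      (Submodule.span ℂ (Set.range Y)).comap (shiftOp H j l) := by
    refine Submodule.span_le.mpr (Set.range_subset_iff.mpr fun m => ?_)
    have hY : ∀ k, Y k ∈ Submodule.span ℂ (Set.range Y) := fun k => Submodule.subset_span ⟨k, rfl⟩
    rw [SetLike.mem_coe, Submodule.mem_comap, shiftOp_apply, Lam1, neg_lie, sub_lie, hHY, hHY]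
    refine Submodule.smul_mem _ _ (neg_mem (sub_mem ?_ ?_)) <;>
      exact neg_mem (nsmul_mem (add_mem (hY _) (hY _)) 2)
  induction u with
  | zero => exact Submodule.subset_span ⟨l, rfl⟩
  | succ u ih => rw [Dm_succ]; exact neg_mem (hstable ih)

theorem lie_Dm_mem_span (hXY : ∀ j l : ℤ, ⁅X j, Y l⁆ = H (j + l) - H (j - l))
    (hHY : ∀ k l : ℤ, ⁅H k, Y l⁆ = -(2 • (Y (l + k) + Y (l - k)))) (k : ℤ) (u : ℕ) :
    ⁅X k, Dm Y H j l u⁆ ∈ Submodule.span ℂ (Set.range H) := by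
  have hmaps : Submodule.span ℂ (Set.range Y) ≤
      (Submodule.span ℂ (Set.range H)).comap (LieAlgebra.ad ℂ A (X k)) := by
    refine Submodule.span_le.mpr (Set.range_subset_iff.mpr fun m => ?_)
    rw [SetLike.mem_coe, Submodule.mem_comap, LieAlgebra.ad_apply, hXY]
    exact sub_mem (Submodule.subset_span ⟨_, rfl⟩) (Submodule.subset_span ⟨_, rfl⟩)
  exact hmaps (Dm_mem_span hHY u)

theorem lie_lie_shiftOp_Y (hXneg : ∀ m : ℤ, X (-m) = -X m)
    (hXY : ∀ j l : ℤ, ⁅X j, Y l⁆ = H (j + l) - H (j - l))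
    (hHX : ∀ k j : ℤ, ⁅H k, X j⁆ = 2 • (X (j + k) - X (k - j)))
    (hHY : ∀ k l : ℤ, ⁅H k, Y l⁆ = -(2 • (Y (l + k) + Y (l - k)))) (m : ℤ) :
    ⁅⁅X j, shiftOp H j l (Y m)⁆, X j⁆ = -shiftOp H j l ⁅⁅X j, Y m⁆, X j⁆ := by
  have hHX' : ∀ k a, ⁅H k, X a⁆ = 2 • (X (a + k) + X (a - k)) := fun k a => by
    rw [hHX, show k - a = -(a - k) by ring, hXneg, sub_neg_eq_add]
  simp only [shiftOp_apply, Lam1, lie_smul, smul_lie, neg_lie, lie_neg, sub_lie, lie_sub, hHY,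
    hHX', hXY, lie_add, add_lie, lie_nsmul, nsmul_lie, smul_add, smul_sub, smul_neg]
  -- normalise the integer indices so that equal generators become equal atoms for `module`
  ring_nf
  module

section Relations

variable (hXneg : ∀ m : ℤ, X (-m) = -X m)
  (hXY : ∀ j l : ℤ, ⁅X j, Y l⁆ = H (j + l) - H (j - l))
  (hHX : ∀ k j : ℤ, ⁅H k, X j⁆ = 2 • (X (j + k) - X (k - j)))
  (hHY : ∀ k l : ℤ, ⁅H k, Y l⁆ = -(2 • (Y (l + k) + Y (l - k))))
  (hHH : ∀ k m : ℤ, ⁅H k, H m⁆ = 0)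
include hXneg hXY hHX hHY

theorem lie_lie_shiftOp {a : A} (ha : a ∈ Submodule.span ℂ (Set.range Y)) :
    ⁅⁅X j, shiftOp H j l a⁆, X j⁆ = -shiftOp H j l ⁅⁅X j, a⁆, X j⁆ := by
  induction ha using Submodule.span_induction with
  | mem x hx =>
    obtain ⟨m, rfl⟩ := hx
    exact lie_lie_shiftOp_Y hXneg hXY hHX hHY m
  | zero => simp
  | add x y _ _ hx hy => simp only [map_add, lie_add, add_lie, hx, hy, neg_add]
  | smul c x _ hx => simp only [map_smul, lie_smul, smul_lie, hx, smul_neg]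

theorem lie_lie_Dm (s : ℕ) : ⁅⁅X j, Dm Y H j l s⁆, X j⁆ = 2 • Dp X H j l (s + 1) := by
  induction s with
  | zero =>
    rw [Dp_succ, shiftOp_apply, Dm, Dp, hXY, ← neg_neg (H (j + l) - H (j - l)), ← Lam1, neg_lie]
    module
  | succ s ih =>
    rw [Dm_succ, lie_neg, neg_lie, lie_lie_shiftOp hXneg hXY hHX hHY (Dm_mem_span hHY s),
      neg_neg, ih, map_nsmul, ← Dp_succ]

include hHH in
theorem lie_lie_Dm_Dp (s u : ℕ) :
    ⁅⁅X j, Dm Y H j l s⁆, Dp X H j l u⁆ = 2 • Dp X H j l (u + s + 1) := by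
  induction u with
  | zero => rw [zero_add]; exact lie_lie_Dm hXneg hXY hHX hHY s
  | succ u ih =>
    rw [Dp_succ, lie_shiftOp_of_mem_span hHH (lie_Dm_mem_span hXY hHY j s), ih, map_nsmul,
      ← Dp_succ, add_right_comm u]

include hHH in
theorem Dp_mul_lie_Dm (s w : ℕ) :
    Dp X H j l w * ⁅X j, Dm Y H j l s⁆ =
      ⁅X j, Dm Y H j l s⁆ * Dp X H j l w - 2 • Dp X H j l (w + s + 1) := by
  rw [← lie_lie_Dm_Dp hXneg hXY hHX hHY hHH, Ring.lie_def _ (Dp X H j l w), sub_sub_cancel]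

end Relations

theorem Lam_zero : Lam X Y H j l 0 = 1 := by
  rw [Lam]

theorem succ_nsmul_Lam_succ (n : ℕ) :
    (n + 1) • Lam X Y H j l (n + 1) =
      -∑ i ∈ range (n + 1), ⁅X j, Dm Y H j l i⁆ * Lam X Y H j l (n - i) := by
  rw [Lam, ← Nat.cast_smul_eq_nsmul ℂ, smul_smul, Nat.cast_add_one, mul_neg,
    mul_inv_cancel₀ (Nat.cast_add_one_ne_zero n), neg_smul, one_smul]
  simp only [pG, Nat.add_sub_cancel]

end Onsager

theorem Dp_mul_Lam_general (X Y H : ℤ → A)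
    (hXneg : ∀ m : ℤ, X (-m) = -X m)
    (hXY : ∀ j l : ℤ, ⁅X j, Y l⁆ = H (j + l) - H (j - l))
    (hHX : ∀ k j : ℤ, ⁅H k, X j⁆ = 2 • (X (j + k) - X (k - j)))
    (hHY : ∀ k l : ℤ, ⁅H k, Y l⁆ = -(2 • (Y (l + k) + Y (l - k))))
    (hHH : ∀ k m : ℤ, ⁅H k, H m⁆ = 0)
    (u n : ℕ) (j l : ℕ+) :
    Dp X H ((j : ℕ) : ℤ) ((l : ℕ) : ℤ) u * Lam X Y H ((j : ℕ) : ℤ) ((l : ℕ) : ℤ) n =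
      ∑ i ∈ Finset.range (n + 1),
        (i + 1) • (Lam X Y H ((j : ℕ) : ℤ) ((l : ℕ) : ℤ) (n - i) *
          Dp X H ((j : ℕ) : ℤ) ((l : ℕ) : ℤ) (i + u)) := by
  have : IsAddTorsionFree A := .of_isTorsionFree ℂ A
  refine congrFun (congrFun (IsShiftRecursion.unique
    (isShiftRecursion_mul succ_nsmul_Lam_succ (Dp_mul_lie_Dm hXneg hXY hHX hHY hHH))
    (isShiftRecursion_sum succ_nsmul_Lam_succ) ?_) n) u
  funext u
  simp [Lam_zero]

/-- `D^{Γ,+}_{u,1}(j,l) Λ^Γ_{j,l,n} = ∑_{i=0}^n (i+1) Λ^Γ_{j,l,n-i} D^{Γ,+}_{i+u,1}(j,l)`. -/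
theorem Dp_mul_Lam (X Y H : ℤ → A)
    (hXneg : ∀ m : ℤ, X (-m) = -X m) (hX0 : X 0 = 0)
    (hYneg : ∀ m : ℤ, Y (-m) = -Y m) (hY0 : Y 0 = 0)
    (hHneg : ∀ m : ℤ, H (-m) = H m)
    (hXY : ∀ j l : ℤ, ⁅X j, Y l⁆ = H (j + l) - H (j - l))
    (hHX : ∀ k j : ℤ, ⁅H k, X j⁆ = 2 • (X (j + k) - X (k - j)))
    (hHY : ∀ k l : ℤ, ⁅H k, Y l⁆ = -(2 • (Y (l + k) + Y (l - k))))
    (hHH : ∀ k m : ℤ, ⁅H k, H m⁆ = 0)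
    (u n : ℕ) (j l : ℕ+) :
    Dp X H ((j : ℕ) : ℤ) ((l : ℕ) : ℤ) u * Lam X Y H ((j : ℕ) : ℤ) ((l : ℕ) : ℤ) n =
      ∑ i ∈ Finset.range (n + 1),
        (i + 1) • (Lam X Y H ((j : ℕ) : ℤ) ((l : ℕ) : ℤ) (n - i) *
          Dp X H ((j : ℕ) : ℤ) ((l : ℕ) : ℤ) (i + u)) :=
  Dp_mul_Lam_general X Y H hXneg hXY hHX hHY hHH u n j l
end
end
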